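/- Exact policy improvement for LQR: let A − BK₁ be stable, P₁ the unique symmetric solution of (A−BK₁)ᵀP₁(A−BK₁) − P₁ + S + K₁ᵀRK₁ = 0 with S ≥ 0 and R > 0, and define K₂ = (R + BᵀP₁B)⁻¹BᵀP₁A. Then for every x ∈ ℝⁿ, xᵀ((A−BK₂)ᵀP₁(A−BK₂) − P₁)x ≤ −xᵀ(S + K₂ᵀRK₂)x; i.e., (A−BK₂)ᵀP₁(A−BK₂) − P₁ + S + K₂ᵀRK₂ ≤ 0 in the Loewner order. -/

import Mathlib

/-!
With `M = R + BᵀP₁B`, the gain `K₂` solves `M K₂ = BᵀP₁A`, and completing the square in the gain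
shows that the Lyapunov residual `(A - BK)ᵀP₁(A - BK) - P₁ + S + KᵀRK` of any gain `K` exceeds
that of `K₂` by `(K - K₂)ᵀM(K - K₂)`. The residual of `K₁` is zero, so the residual of `K₂` is
`-(K₁ - K₂)ᵀM(K₁ - K₂)`, and it remains to see `M ≥ 0`, i.e. `P₁ ≥ 0`: the quadratic form of `P₁`
does not increase along the trajectories `x, Lx, L²x, …` of `L = A - BK₁`, and these tend to `0`
by Gelfand's formula.
-/

open Filter Topology Matrix
open scoped ENNReal NNReal

/-- A real square matrix is stable if all of its complex eigenvalues have
absolute value strictly less than 1 (spectral radius < 1). -/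
def Matrix.IsStable {n : ℕ} (X : Matrix (Fin n) (Fin n) ℝ) : Prop :=
  ∀ μ ∈ spectrum ℂ (X.map ((↑) : ℝ → ℂ)), ‖μ‖ < 1

section BanachAlgebra

variable {A : Type*} [NormedRing A] [NormedAlgebra ℂ A] [CompleteSpace A]

theorem spectrum.spectralRadius_lt_one_of_forall_norm_lt {a : A}
    (h : ∀ μ ∈ spectrum ℂ a, ‖μ‖ < 1) : spectralRadius ℂ a < 1 := by
  rcases (spectrum ℂ a).eq_empty_or_nonempty with hempty | hne
  · simp [spectralRadius, hempty]
  · exact_mod_cast spectrum.spectralRadius_lt_of_forall_lt_of_nonempty hne (r := 1)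
      fun μ hμ => by exact_mod_cast h μ hμ

theorem spectrum.tendsto_pow_atTop_nhds_zero_of_spectralRadius_lt_one {a : A}
    (h : spectralRadius ℂ a < 1) : Tendsto (a ^ ·) atTop (𝓝 0) := by
  obtain ⟨r, hρr, hr1⟩ := ENNReal.lt_iff_exists_nnreal_btwn.mp h
  have hbound : ∀ᶠ k : ℕ in atTop, ‖a ^ k‖ ≤ (r : ℝ) ^ k := by
    filter_upwards [(pow_nnnorm_pow_one_div_tendsto_nhds_spectralRadius a).eventually_lt_const hρr,
      eventually_ge_atTop 1] with k hk hk1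
    rw [one_div, ENNReal.rpow_inv_lt_iff (by positivity : (0:ℝ) < k), ENNReal.rpow_natCast,
      ← ENNReal.coe_pow, ENNReal.coe_lt_coe, ← NNReal.coe_lt_coe] at hk
    simpa using hk.le
  rw [tendsto_zero_iff_norm_tendsto_zero]
  exact squeeze_zero' (.of_forall fun k => norm_nonneg _) hbound
    (tendsto_pow_atTop_nhds_zero_of_lt_one r.coe_nonneg (by exact_mod_cast hr1))

end BanachAlgebra

section Stability

attribute [local instance] Matrix.linftyOpNormedRing Matrix.linftyOpNormedAlgebra

theorem Matrix.IsStable.tendsto_pow {n : ℕ} {L : Matrix (Fin n) (Fin n) ℝ} (hL : L.IsStable) :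
    Tendsto (L ^ ·) atTop (𝓝 0) := by
  have hX := spectrum.tendsto_pow_atTop_nhds_zero_of_spectralRadius_lt_one
    (spectrum.spectralRadius_lt_one_of_forall_norm_lt hL)
  have hre : Continuous fun X : Matrix (Fin n) (Fin n) ℂ => X.map Complex.re :=
    continuous_id.matrix_map Complex.continuous_re
  convert (hre.tendsto 0).comp hX using 1
  · funext k
    ext i j
    have hpow : L.map Complex.ofReal ^ k = (L ^ k).map Complex.ofReal :=
      (map_pow Complex.ofRealHom.mapMatrix L k).symm
    simp [hpow]
  · simp

end Stability

theorem Matrix.IsStable.posSemidef_of_lyapunov_eq {n : ℕ} {L P Q : Matrix (Fin n) (Fin n) ℝ}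
    (hL : L.IsStable) (hP : P.IsSymm) (hQ : Q.PosSemidef) (h : Lᵀ * P * L - P + Q = 0) :
    P.PosSemidef := by
  rw [Matrix.posSemidef_iff_dotProduct_mulVec]
  refine ⟨by rwa [Matrix.IsHermitian, conjTranspose_eq_transpose_of_trivial], fun x => ?_⟩
  rw [star_trivial]
  set q : (Fin n → ℝ) → ℝ := fun y => y ⬝ᵥ P *ᵥ y
  have hstep : ∀ y, q (L *ᵥ y) ≤ q y := by
    intro y
    have hQy : 0 ≤ y ⬝ᵥ Q *ᵥ y := by simpa using hQ.dotProduct_mulVec_nonneg y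
    have hq : q (L *ᵥ y) - q y + y ⬝ᵥ Q *ᵥ y = 0 := by
      simpa [q, Matrix.sub_mulVec, Matrix.add_mulVec, ← Matrix.mulVec_mulVec,
        Matrix.dotProduct_mulVec _ Lᵀ, Matrix.vecMul_transpose]
        using congrArg (fun M => y ⬝ᵥ M *ᵥ y) h
    linarith
  have hdecr : ∀ k : ℕ, q ((L ^ k) *ᵥ x) ≤ q x := by
    intro k
    induction k with
    | zero => simp
    | succ k ih =>
      rw [pow_succ', ← Matrix.mulVec_mulVec]
      exact (hstep _).trans ih
  have hlim : Tendsto (fun k : ℕ => q ((L ^ k) *ᵥ x)) atTop (𝓝 0) := by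
    have hq : Continuous fun M : Matrix (Fin n) (Fin n) ℝ => q (M *ᵥ x) := by fun_prop
    simpa [q, Function.comp_def] using (hq.tendsto 0).comp hL.tendsto_pow
  exact le_of_tendsto' hlim hdecr

section Residual

variable {α l m : Type*} [CommRing α] [Fintype l] [Fintype m]

def Matrix.lqrResidual (A : Matrix l l α) (B : Matrix l m α) (S : Matrix l l α)
    (R : Matrix m m α) (P : Matrix l l α) (K : Matrix m l α) : Matrix l l α :=
  (A - B * K)ᵀ * P * (A - B * K) - P + S + Kᵀ * R * K

theorem Matrix.lqrResidual_eq_add_of_mul_eq {A P S : Matrix l l α} {B : Matrix l m α}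
    {R : Matrix m m α} {K₀ : Matrix m l α} (hP : Pᵀ = P) (hR : Rᵀ = R)
    (hK₀ : (R + Bᵀ * P * B) * K₀ = Bᵀ * P * A) (K : Matrix m l α) :
    lqrResidual A B S R P K =
      lqrResidual A B S R P K₀ + (K - K₀)ᵀ * (R + Bᵀ * P * B) * (K - K₀) := by
  obtain ⟨D, rfl⟩ : ∃ D, K = K₀ + D := ⟨K - K₀, by abel⟩
  rw [lqrResidual, lqrResidual, add_sub_cancel_left]
  have hcl : A - B * (K₀ + D) = A - B * K₀ - B * D := by rw [Matrix.mul_add, sub_add_eq_sub_sub]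
  set F := A - B * K₀
  -- `hK₀` is the first-order condition `Bᵀ P (A - B K₀) = R K₀`; it kills the cross terms in `D`.
  have hF : Bᵀ * (P * F) = R * K₀ := by
    rw [← Matrix.mul_assoc, Matrix.mul_sub, ← hK₀]
    simp only [Matrix.add_mul, Matrix.mul_assoc]
    abel
  have hFD : Dᵀ * (Bᵀ * (P * F)) = Dᵀ * (R * K₀) := by rw [hF]
  have hDF : Fᵀ * (P * (B * D)) = K₀ᵀ * (R * D) := by
    simpa [transpose_mul, hP, hR, Matrix.mul_assoc] using congrArg transpose hFD
  rw [hcl]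
  simp only [transpose_sub, transpose_add, transpose_mul, Matrix.sub_mul, Matrix.mul_sub,
    Matrix.add_mul, Matrix.mul_add, Matrix.mul_assoc, hFD, hDF]
  abel

end Residual

theorem exact_policy_improvement_general {n m : ℕ}
    (A : Matrix (Fin n) (Fin n) ℝ) (B : Matrix (Fin n) (Fin m) ℝ)
    (S : Matrix (Fin n) (Fin n) ℝ) (R : Matrix (Fin m) (Fin m) ℝ)
    (K₁ : Matrix (Fin m) (Fin n) ℝ) (P₁ : Matrix (Fin n) (Fin n) ℝ)
    (hS : S.PosSemidef) (hR : R.PosDef)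
    (hstab : (A - B * K₁).IsStable) (hP₁ : P₁.IsSymm)
    (hLyap : (A - B * K₁).transpose * P₁ * (A - B * K₁) - P₁ +
      S + K₁.transpose * R * K₁ = 0)
    (K₂ : Matrix (Fin m) (Fin n) ℝ)
    (hK₂ : K₂ = (R + B.transpose * P₁ * B)⁻¹ * B.transpose * P₁ * A) :
    (-((A - B * K₂).transpose * P₁ * (A - B * K₂) - P₁ +
        S + K₂.transpose * R * K₂)).PosSemidef := by
  have hP₁psd : P₁.PosSemidef := by
    refine hstab.posSemidef_of_lyapunov_eq hP₁ (Q := S + K₁ᵀ * R * K₁) ?_ ?_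
    · simpa using hS.add (hR.posSemidef.conjTranspose_mul_mul_same K₁)
    · rw [← hLyap, add_assoc]
  have hM : (R + Bᵀ * P₁ * B).PosDef := by
    simpa using hR.add_posSemidef (hP₁psd.conjTranspose_mul_mul_same B)
  have hK₂M : (R + Bᵀ * P₁ * B) * K₂ = Bᵀ * P₁ * A := by
    have hMdet := (isUnit_iff_isUnit_det _).mp hM.isUnit
    simp only [hK₂, ← Matrix.mul_assoc, mul_nonsing_inv _ hMdet, Matrix.one_mul]
  have hRsymm : Rᵀ = R := by simpa using hR.isHermitian.eq
  have hcost := lqrResidual_eq_add_of_mul_eq (S := S) hP₁.eq hRsymm hK₂M K₁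
  rw [show lqrResidual A B S R P₁ K₁ = 0 from hLyap, eq_comm] at hcost
  change (-lqrResidual A B S R P₁ K₂).PosSemidef
  rw [neg_eq_of_add_eq_zero_right hcost]
  simpa using hM.posSemidef.conjTranspose_mul_mul_same (K₁ - K₂)

/-- Exact policy improvement for LQR: with `P₁` the Lyapunov solution for a
stabilizing gain `K₁` and `K₂ = (R + BᵀP₁B)⁻¹BᵀP₁A`, one has
`(A−BK₂)ᵀP₁(A−BK₂) − P₁ + S + K₂ᵀRK₂ ≤ 0` in the Loewner order. -/
theorem exact_policy_improvement {n m : ℕ}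
    (A : Matrix (Fin n) (Fin n) ℝ) (B : Matrix (Fin n) (Fin m) ℝ)
    (S : Matrix (Fin n) (Fin n) ℝ) (R : Matrix (Fin m) (Fin m) ℝ)
    (K₁ : Matrix (Fin m) (Fin n) ℝ) (P₁ : Matrix (Fin n) (Fin n) ℝ)
    (hS : S.PosSemidef) (hR : R.PosDef)
    (hstab : (A - B * K₁).IsStable) (hP₁ : P₁.IsSymm)
    (hLyap : (A - B * K₁).transpose * P₁ * (A - B * K₁) - P₁ +
      S + K₁.transpose * R * K₁ = 0)
    (hRinv : IsUnit (R + B.transpose * P₁ * B).det)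
    (K₂ : Matrix (Fin m) (Fin n) ℝ)
    (hK₂ : K₂ = (R + B.transpose * P₁ * B)⁻¹ * B.transpose * P₁ * A) :
    (-((A - B * K₂).transpose * P₁ * (A - B * K₂) - P₁ +
        S + K₂.transpose * R * K₂)).PosSemidef :=
  exact_policy_improvement_general A B S R K₁ P₁ hS hR hstab hP₁ hLyap K₂ hK₂
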